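/- Let ≺ be a computable linear order on ℕ isomorphic to (ℕ,<) via the isomorphism φ, and let f : ℕ → ℕ be computable. Then the image function f_φ = φ ∘ f ∘ φ⁻¹ is Turing reducible to the image Succ_φ = φ ∘ S ∘ φ⁻¹ of the successor function S(n) = n+1. -/

import Mathlib

/-- Oracle computability: partial recursive in the total oracle `O`. -/
inductive OracleRecursiveIn (O : ℕ → ℕ) : (ℕ →. ℕ) → Prop
  | zero : OracleRecursiveIn O fun _ => 0
  | succ : OracleRecursiveIn O Nat.succ
  | left : OracleRecursiveIn O fun n => (Nat.unpair n).1
  | right : OracleRecursiveIn O fun n => (Nat.unpair n).2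
  | oracle : OracleRecursiveIn O O
  | pair {f g : ℕ →. ℕ} : OracleRecursiveIn O f → OracleRecursiveIn O g →
      OracleRecursiveIn O fun n => Nat.pair <$> f n <*> g n
  | comp {f g : ℕ →. ℕ} : OracleRecursiveIn O f → OracleRecursiveIn O g →
      OracleRecursiveIn O fun n => g n >>= f
  | prec {f g : ℕ →. ℕ} : OracleRecursiveIn O f → OracleRecursiveIn O g →
      OracleRecursiveIn O (Nat.unpaired fun a n =>
        n.rec (f a) fun y IH => do let i ← IH; g (Nat.pair a (Nat.pair y i)))
  | rfind {f : ℕ →. ℕ} : OracleRecursiveIn O f →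
      OracleRecursiveIn O fun a =>
        Nat.rfind fun n => (fun m => m = 0) <$> f (Nat.pair a n)

/-- Turing reducibility between total functions on ℕ. -/
def TotalTuringReducible (f g : ℕ → ℕ) : Prop := OracleRecursiveIn g f

/-- Turing equivalence between total functions on ℕ. -/
def TuringEquiv (f g : ℕ → ℕ) : Prop := TotalTuringReducible f g ∧ TotalTuringReducible g f

/-! With the oracle `Succ_φ = φ ∘ S ∘ φ⁻¹` one computes `φ n` by iterating the oracle `n` times
from the constant `φ 0`, and `φ⁻¹ a` by searching for the least `n` with `φ n = a`. Composing,
`f_φ = φ ∘ f ∘ φ⁻¹` is computable from the oracle. -/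

namespace OracleRecursiveIn

variable {O : ℕ → ℕ}

theorem of_eq {f g : ℕ →. ℕ} (hf : OracleRecursiveIn O f) (H : ∀ n, f n = g n) :
    OracleRecursiveIn O g :=
  funext H ▸ hf

theorem of_eq_tot {f : ℕ →. ℕ} {g : ℕ → ℕ} (hf : OracleRecursiveIn O f)
    (H : ∀ n, g n ∈ f n) : OracleRecursiveIn O g :=
  hf.of_eq fun n => Part.eq_some_iff.2 (H n)

theorem of_partrec {f : ℕ →. ℕ} (h : Nat.Partrec f) : OracleRecursiveIn O f := by
  induction h with
  | zero => exact .zero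
  | succ => exact .succ
  | left => exact .left
  | right => exact .right
  | pair _ _ ihf ihg => exact .pair ihf ihg
  | comp _ _ ihf ihg => exact .comp ihf ihg
  | prec _ _ ihf ihg => exact .prec ihf ihg
  | rfind _ ih => exact .rfind ih

theorem of_computable {f : ℕ → ℕ} (h : Computable f) : OracleRecursiveIn O f :=
  of_partrec (Partrec.nat_iff.1 h.partrec)

theorem comp_total {f g : ℕ → ℕ} (hf : OracleRecursiveIn O f) (hg : OracleRecursiveIn O g) :
    OracleRecursiveIn O (fun n => f (g n) : ℕ → ℕ) :=
  (comp hf hg).of_eq_tot fun _ => Part.mem_bind (Part.mem_some _) (Part.mem_some _)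

theorem pair_total {f g : ℕ → ℕ} (hf : OracleRecursiveIn O f) (hg : OracleRecursiveIn O g) :
    OracleRecursiveIn O (fun n => Nat.pair (f n) (g n) : ℕ → ℕ) :=
  (pair hf hg).of_eq_tot fun n => by simp [Seq.seq, PFun.coe_val]

theorem comp₂_total {h : ℕ → ℕ → ℕ} {f g : ℕ → ℕ} (hh : Computable₂ h)
    (hf : OracleRecursiveIn O f) (hg : OracleRecursiveIn O g) :
    OracleRecursiveIn O (fun n => h (f n) (g n) : ℕ → ℕ) := by
  have hh' : Computable fun m : ℕ => h m.unpair.1 m.unpair.2 :=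
    hh.comp (Computable.fst.comp Computable.unpair) (Computable.snd.comp Computable.unpair)
  simpa only [Nat.unpair_pair] using comp_total (of_computable hh') (pair_total hf hg)

theorem iterate {g : ℕ → ℕ} (hg : OracleRecursiveIn O g) (c : ℕ) :
    OracleRecursiveIn O (fun n => g^[n] c : ℕ → ℕ) := by
  have hstep : OracleRecursiveIn O (fun m => g m.unpair.2.unpair.2 : ℕ → ℕ) :=
    comp_total hg (of_computable (Computable.snd.comp (Computable.unpair.comp
      (Computable.snd.comp Computable.unpair))))
  have hpair : Computable fun n => Nat.pair 0 n :=
    (Primrec₂.natPair.comp (Primrec.const 0) Primrec.id).to_comp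
  refine (comp (prec (of_computable (Computable.const c)) hstep) (of_computable hpair)).of_eq_tot
    fun n => ?_
  simp only [PFun.coe_val, Part.bind_eq_bind, Part.bind_some, Nat.unpaired, Nat.unpair_pair]
  induction n with
  | zero => exact Part.mem_some c
  | succ k ih =>
    rw [Function.iterate_succ_apply']
    exact Part.mem_bind ih (Part.mem_some _)

theorem equiv_symm {e : ℕ ≃ ℕ} (he : OracleRecursiveIn O e) :
    OracleRecursiveIn O (e.symm : ℕ → ℕ) := by
  have htest : OracleRecursiveIn O
      (fun m : ℕ => if e m.unpair.2 = m.unpair.1 then 0 else 1 : ℕ → ℕ) :=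
    comp₂_total (h := fun a b => if b = a then 0 else 1)
      (Primrec.ite (Primrec.eq.comp Primrec.snd Primrec.fst)
        (Primrec.const 0) (Primrec.const 1)).to_comp
      left (comp_total he right)
  refine (rfind htest).of_eq_tot fun a =>
    Nat.mem_rfind.2 ⟨by simp [PFun.coe_val], fun {m} hm => ?_⟩
  have hne : e m ≠ a := fun h => hm.ne (e.symm_apply_eq.2 h.symm).symm
  simp [PFun.coe_val, hne]

end OracleRecursiveIn

theorem Equiv.iterate_conj_succ (φ : ℕ ≃ ℕ) (n : ℕ) :
    (fun a => φ (φ.symm a + 1))^[n] (φ 0) = φ n := by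
  induction n with
  | zero => rfl
  | succ k ih => rw [Function.iterate_succ_apply', ih, φ.symm_apply_apply]

theorem image_reducible_to_successor_image_general
    (φ : ℕ ≃ ℕ)
    (f : ℕ → ℕ) (hf : Computable f) :
    TotalTuringReducible (fun a => φ (f (φ.symm a))) (fun a => φ (φ.symm a + 1)) := by
  have hφ : OracleRecursiveIn (fun a => φ (φ.symm a + 1)) φ := by
    simpa only [φ.iterate_conj_succ] using
      OracleRecursiveIn.iterate (g := fun a => φ (φ.symm a + 1)) .oracle (φ 0)
  exact hφ.comp_total ((OracleRecursiveIn.of_computable hf).comp_total hφ.equiv_symm)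

/-- Let `r` be a computable linear order on ℕ isomorphic to `(ℕ, <)` via `φ`, and let
`f` be computable. Then the image `φ ∘ f ∘ φ⁻¹` of `f` is Turing reducible to the image
`φ ∘ S ∘ φ⁻¹` of the successor function `S(n) = n + 1`. -/
theorem image_reducible_to_successor_image (r : ℕ → ℕ → Prop)
    (hlin : IsStrictTotalOrder ℕ r)
    (χ : ℕ → ℕ → Bool) (hχ : Computable fun p : ℕ × ℕ => χ p.1 p.2)
    (hχr : ∀ x y, r x y ↔ χ x y = true)
    (φ : ℕ ≃ ℕ) (hiso : ∀ x y, x < y ↔ r (φ x) (φ y))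
    (f : ℕ → ℕ) (hf : Computable f) :
    TotalTuringReducible (fun a => φ (f (φ.symm a))) (fun a => φ (φ.symm a + 1)) :=
  image_reducible_to_successor_image_general φ f hf
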